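/- Let U be a nonzero n×n paraunitary matrix of Laurent polynomials over ℂ, and let Δ be a real number with 0 < Δ < 1. Then ‖U[Δ]‖ ≤ Δ^{val(U)}, where ‖·‖ is the operator (spectral) norm. -/

import Mathlib

open scoped ComplexConjugate
open LaurentPolynomial Finset

noncomputable section

/-- Evaluation of a Laurent polynomial at a complex number. -/
def Leval (ω : ℂ) (p : LaurentPolynomial ℂ) : ℂ :=
  ∑ k ∈ p.coeff.support, p.coeff k * ω ^ k

/-- Para-conjugate of a Laurent polynomial: conjugate the coefficients and substitute `z⁻¹`. -/
def paraConj (p : LaurentPolynomial ℂ) : LaurentPolynomial ℂ :=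
  AddMonoidAlgebra.ofCoeff (Finsupp.equivMapDomain (Equiv.neg ℤ) (Finsupp.mapRange (starRingEnd ℂ) (map_zero _) p.coeff))

/-- `U*`: the transpose of `U` with every entry para-conjugated. -/
def paraConjTranspose {n : ℕ} (U : Matrix (Fin n) (Fin n) (LaurentPolynomial ℂ)) :
    Matrix (Fin n) (Fin n) (LaurentPolynomial ℂ) :=
  U.transpose.map paraConj

/-- A Laurent-polynomial matrix is paraunitary if `U* * U = 1`. -/
def IsParaunitary {n : ℕ} (U : Matrix (Fin n) (Fin n) (LaurentPolynomial ℂ)) : Prop :=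
  paraConjTranspose U * U = 1

/-- Entrywise evaluation of a matrix of Laurent polynomials at a complex number. -/
def MatEval {n : ℕ} (ω : ℂ) (M : Matrix (Fin n) (Fin n) (LaurentPolynomial ℂ)) :
    Matrix (Fin n) (Fin n) ℂ :=
  M.map (Leval ω)

/-- A plane-rotation gate: identity except on the 2×2 principal submatrix in rows/columns
`a ≠ b`, where it is a real orthogonal 2×2 matrix (embedded as constant Laurent polynomials). -/
def IsRotationGate {n : ℕ} (G : Matrix (Fin n) (Fin n) (LaurentPolynomial ℂ)) : Prop :=
  ∃ (a b : Fin n) (R : Matrix (Fin 2) (Fin 2) ℝ), a ≠ b ∧ R.transpose * R = 1 ∧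
    G a a = LaurentPolynomial.C (R 0 0 : ℂ) ∧
    G a b = LaurentPolynomial.C (R 0 1 : ℂ) ∧
    G b a = LaurentPolynomial.C (R 1 0 : ℂ) ∧
    G b b = LaurentPolynomial.C (R 1 1 : ℂ) ∧
    (∀ i : Fin n, i ≠ a → i ≠ b → G i i = 1) ∧
    (∀ i j : Fin n, i ≠ j → ¬(i = a ∧ j = b) → ¬(i = b ∧ j = a) → G i j = 0)

/-- A monomial gate: diagonal, equal to `1` on every diagonal entry except one, which is `z^k`. -/
def IsMonomialGate {n : ℕ} (G : Matrix (Fin n) (Fin n) (LaurentPolynomial ℂ)) : Prop :=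
  ∃ (a : Fin n) (k : ℤ),
    G a a = LaurentPolynomial.T k ∧
    (∀ i : Fin n, i ≠ a → G i i = 1) ∧
    (∀ i j : Fin n, i ≠ j → G i j = 0)

/-- A Laurent lift of length `m`: `M 0 = 1` and each step is left multiplication by a
plane-rotation or monomial gate. -/
def IsLaurentLift {n : ℕ} (m : ℕ) (M : ℕ → Matrix (Fin n) (Fin n) (LaurentPolynomial ℂ)) : Prop :=
  M 0 = 1 ∧ ∀ t < m, ∃ G : Matrix (Fin n) (Fin n) (LaurentPolynomial ℂ),
    (IsRotationGate G ∨ IsMonomialGate G) ∧ M (t + 1) = G * M t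

/-- The union of the supports of all the entries of a Laurent-polynomial matrix. -/
def matSupport {n : ℕ} (M : Matrix (Fin n) (Fin n) (LaurentPolynomial ℂ)) : Finset ℤ :=
  (Finset.univ : Finset (Fin n × Fin n)).biUnion fun ij => (M ij.1 ij.2).coeff.support

/-- `deg(M)`: the maximal exponent with a nonzero coefficient over all nonzero entries
(junk value `0` for the zero matrix). -/
def matDeg {n : ℕ} (M : Matrix (Fin n) (Fin n) (LaurentPolynomial ℂ)) : ℤ :=
  WithBot.unbotD 0 (matSupport M).max

/-- `val(M)`: the minimal exponent with a nonzero coefficient over all nonzero entries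
(junk value `0` for the zero matrix). -/
def matVal {n : ℕ} (M : Matrix (Fin n) (Fin n) (LaurentPolynomial ℂ)) : ℤ :=
  WithTop.untopD 0 (matSupport M).min

/-- A Laurent lift is `Δ`-algebraically `κ`-well conditioned if
`Δ ^ (val(M_t) - deg(M_t)) ≤ κ` for all `t`. -/
def IsAlgWellConditioned {n : ℕ} (m : ℕ) (M : ℕ → Matrix (Fin n) (Fin n) (LaurentPolynomial ℂ))
    (Δ κ : ℝ) : Prop :=
  ∀ t ≤ m, Δ ^ (matVal (M t) - matDeg (M t)) ≤ κ

/-- The L2 operator (spectral) norm of a complex matrix. -/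
def specNorm {n : ℕ} (A : Matrix (Fin n) (Fin n) ℂ) : ℝ :=
  ‖Matrix.toEuclideanCLM (𝕜 := ℂ) A‖

/-- The Walsh–Hadamard matrix of order `n = 2^s`:
`H_n(i,j) = n^{-1/2} · (-1)^{⟨[i],[j]⟩}` with `⟨·,·⟩` the mod-2 inner product of bit vectors. -/
def WalshHadamard (s : ℕ) : Matrix (Fin (2 ^ s)) (Fin (2 ^ s)) ℝ :=
  fun i j => (Real.sqrt (2 ^ s))⁻¹ *
    (-1 : ℝ) ^ (∑ r ∈ Finset.range s, (Nat.testBit i.val r).toNat * (Nat.testBit j.val r).toNat)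

/-- The quasi-entropy kernel `h(u) = -u·log₂|u|` (note `h 0 = 0`, since `Real.logb 2 0 = 0`). -/
def hQE (u : ℂ) : ℂ := -u * (Real.logb 2 ‖u‖ : ℂ)

/-- The preconditioned quasi-entropy
`Φ_{A,B}(M) = Σ_k Σ_{i,j} h(coeff((M·A)_{i,j},k) · conj(coeff((M·B)_{i,j},k)))`.
The sum over `k` is restricted to a finite set supporting all nonzero terms. -/
def Phi {n : ℕ} (A B M : Matrix (Fin n) (Fin n) (LaurentPolynomial ℂ)) : ℂ :=
  ∑ i : Fin n, ∑ j : Fin n,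
    ∑ k ∈ ((M * A) i j).coeff.support ∪ ((M * B) i j).coeff.support,
      hQE (((M * A) i j).coeff k * conj (((M * B) i j).coeff k))

/-- The norm of a Laurent polynomial: `sqrt (Σ_k |coeff(p,k)|²)`. -/
def pnorm (p : LaurentPolynomial ℂ) : ℝ :=
  Real.sqrt (∑ k ∈ p.coeff.support, ‖p.coeff k‖ ^ 2)

/-- The norm of the `i`-th row of a Laurent-polynomial matrix. -/
def rowNorm {n : ℕ} (M : Matrix (Fin n) (Fin n) (LaurentPolynomial ℂ)) (i : Fin n) : ℝ :=
  Real.sqrt (∑ j : Fin n, pnorm (M i j) ^ 2)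

/-- The `(2,∞)` norm of a Laurent-polynomial matrix: the maximum row norm. -/
def norm2inf {n : ℕ} (M : Matrix (Fin n) (Fin n) (LaurentPolynomial ℂ)) : ℝ :=
  ⨆ i : Fin n, rowNorm M i

end

/-!
On the unit circle a paraunitary matrix is unitary, so its evaluation there has spectral norm at
most one. Writing `v = val(U)`, the map `z ↦ z^(-v) U[z]` is a matrix polynomial in `z`, hence
entire, and has norm at most one on the unit circle; by the maximum modulus principle it has norm
at most one on the closed unit disc, which gives `‖U[ω]‖ ≤ |ω|^v` for `0 < |ω| ≤ 1`.
-/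

open scoped Matrix

noncomputable section

def levalHom (u : ℂˣ) : LaurentPolynomial ℂ →ₐ[ℂ] ℂ :=
  AddMonoidAlgebra.lift ℂ ℂ ℤ ((Units.coeHom ℂ).comp (zpowersHom ℂˣ u))

theorem levalHom_apply (u : ℂˣ) (p : LaurentPolynomial ℂ) : levalHom u p = Leval u p := by
  rw [levalHom, AddMonoidAlgebra.lift_apply, Finsupp.sum, Leval]
  exact Finset.sum_congr rfl fun k _ => by simp [smul_eq_mul]

theorem Leval_eq_sum_of_support_subset (ω : ℂ) {p : LaurentPolynomial ℂ} {s : Finset ℤ}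
    (hs : p.coeff.support ⊆ s) : Leval ω p = ∑ k ∈ s, p.coeff k * ω ^ k :=
  Finset.sum_subset hs fun k _ hk => by simp [Finsupp.notMem_support_iff.mp hk]

theorem coeff_paraConj (p : LaurentPolynomial ℂ) (k : ℤ) :
    (paraConj p).coeff k = conj (p.coeff (-k)) := by
  simp [paraConj, Finsupp.equivMapDomain_apply]

theorem Leval_paraConj {z : ℂ} (hz : ‖z‖ = 1) (p : LaurentPolynomial ℂ) :
    Leval z (paraConj p) = conj (Leval z p) := by
  have hconj : conj z = z⁻¹ := (Complex.inv_eq_conj hz).symm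
  have hsupp : (paraConj p).coeff.support ⊆ p.coeff.support.map (Equiv.neg ℤ).toEmbedding := by
    intro k hk
    rw [Finsupp.mem_support_iff, coeff_paraConj, map_ne_zero] at hk
    exact Finset.mem_map.mpr ⟨-k, Finsupp.mem_support_iff.mpr hk, neg_neg k⟩
  rw [Leval_eq_sum_of_support_subset z hsupp, Finset.sum_map, Leval, map_sum]
  refine Finset.sum_congr rfl fun k _ => ?_
  simp [coeff_paraConj, hconj]

theorem MatEval_eq_map {n : ℕ} (u : ℂˣ) (M : Matrix (Fin n) (Fin n) (LaurentPolynomial ℂ)) :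
    MatEval u M = M.map (levalHom u) := by
  ext i j
  simp [MatEval, levalHom_apply]

theorem MatEval_mul {n : ℕ} (u : ℂˣ) (A B : Matrix (Fin n) (Fin n) (LaurentPolynomial ℂ)) :
    MatEval u (A * B) = MatEval u A * MatEval u B := by
  simp only [MatEval_eq_map]
  exact Matrix.map_mul (f := (levalHom u : LaurentPolynomial ℂ →+* ℂ))

theorem MatEval_one {n : ℕ} (u : ℂˣ) :
    MatEval u (1 : Matrix (Fin n) (Fin n) (LaurentPolynomial ℂ)) = 1 := by
  rw [MatEval_eq_map]
  exact Matrix.map_one _ (map_zero _) (map_one _)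

theorem MatEval_paraConjTranspose {n : ℕ} {z : ℂ} (hz : ‖z‖ = 1)
    (M : Matrix (Fin n) (Fin n) (LaurentPolynomial ℂ)) :
    MatEval z (paraConjTranspose M) = (MatEval z M)ᴴ := by
  ext i j
  simp [MatEval, paraConjTranspose, Leval_paraConj hz]

theorem IsParaunitary.conjTranspose_MatEval_mul_self {n : ℕ}
    {U : Matrix (Fin n) (Fin n) (LaurentPolynomial ℂ)} (hU : IsParaunitary U) {z : ℂ}
    (hz : ‖z‖ = 1) : (MatEval z U)ᴴ * MatEval z U = 1 := by
  have hz0 : z ≠ 0 := norm_ne_zero_iff.mp (hz ▸ one_ne_zero)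
  rw [← MatEval_paraConjTranspose hz, ← Units.val_mk0 hz0, ← MatEval_mul, hU, MatEval_one]

theorem specNorm_le_one_of_conjTranspose_mul_self {n : ℕ} {A : Matrix (Fin n) (Fin n) ℂ}
    (hA : Aᴴ * A = 1) : specNorm A ≤ 1 := by
  set T := Matrix.toEuclideanCLM (𝕜 := ℂ) A
  have hsq : ‖T‖ * ‖T‖ ≤ 1 := by
    rw [← CStarRing.norm_star_mul_self, ← map_star, ← map_mul, Matrix.star_eq_conjTranspose, hA,
      map_one]
    exact ContinuousLinearMap.norm_id_le
  show ‖T‖ ≤ 1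
  nlinarith [norm_nonneg T]

theorem IsParaunitary.specNorm_MatEval_le_one {n : ℕ}
    {U : Matrix (Fin n) (Fin n) (LaurentPolynomial ℂ)} (hU : IsParaunitary U) {z : ℂ}
    (hz : ‖z‖ = 1) : specNorm (MatEval z U) ≤ 1 :=
  specNorm_le_one_of_conjTranspose_mul_self (hU.conjTranspose_MatEval_mul_self hz)

section MaximumModulus

variable {n : ℕ} (M : Matrix (Fin n) (Fin n) (LaurentPolynomial ℂ))

theorem coeff_support_subset_matSupport (i j : Fin n) : (M i j).coeff.support ⊆ matSupport M :=
  fun _ hk => Finset.mem_biUnion.mpr ⟨(i, j), Finset.mem_univ _, hk⟩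

theorem matVal_le_of_mem_matSupport {k : ℤ} (hk : k ∈ matSupport M) : matVal M ≤ k := by
  obtain ⟨m, hm⟩ := Finset.min_of_mem hk
  rw [matVal, hm, WithTop.untopD_coe]
  exact WithTop.coe_le_coe.mp (hm ▸ Finset.min_le hk)

def coeffMatrix (k : ℤ) : Matrix (Fin n) (Fin n) ℂ := fun i j => (M i j).coeff k

theorem MatEval_eq_sum_coeffMatrix (z : ℂ) :
    MatEval z M = ∑ k ∈ matSupport M, z ^ k • coeffMatrix M k := by
  ext i j
  rw [MatEval, Matrix.map_apply, Leval_eq_sum_of_support_subset z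
    (coeff_support_subset_matSupport M i j), Matrix.sum_apply]
  exact Finset.sum_congr rfl fun k _ => mul_comm _ _

/-- The matrix polynomial `z ↦ z^(-val(M)) M[z]`, as a function valued in operators on `ℂⁿ`. -/
def shiftedEvalCLM (z : ℂ) : EuclideanSpace ℂ (Fin n) →L[ℂ] EuclideanSpace ℂ (Fin n) :=
  ∑ k ∈ matSupport M, z ^ (k - matVal M).toNat • Matrix.toEuclideanCLM (𝕜 := ℂ) (coeffMatrix M k)

theorem differentiable_shiftedEvalCLM : Differentiable ℂ (shiftedEvalCLM M) :=
  Differentiable.fun_sum fun _ _ => (differentiable_pow _).smul_const _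

theorem toEuclideanCLM_MatEval {z : ℂ} (hz : z ≠ 0) :
    Matrix.toEuclideanCLM (𝕜 := ℂ) (MatEval z M) = z ^ matVal M • shiftedEvalCLM M z := by
  rw [MatEval_eq_sum_coeffMatrix, map_sum, shiftedEvalCLM, Finset.smul_sum]
  refine Finset.sum_congr rfl fun k hk => ?_
  rw [map_smul, smul_smul, ← zpow_natCast,
    Int.toNat_of_nonneg (sub_nonneg.mpr (matVal_le_of_mem_matSupport M hk)), ← zpow_add₀ hz,
    add_sub_cancel]

theorem specNorm_MatEval {z : ℂ} (hz : z ≠ 0) :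
    specNorm (MatEval z M) = ‖z‖ ^ matVal M * ‖shiftedEvalCLM M z‖ := by
  rw [specNorm, toEuclideanCLM_MatEval M hz, norm_smul, norm_zpow]

theorem specNorm_MatEval_le_of_forall_norm_eq_one {C : ℝ}
    (hC : ∀ z : ℂ, ‖z‖ = 1 → specNorm (MatEval z M) ≤ C) {ω : ℂ} (hω0 : ω ≠ 0)
    (hω1 : ‖ω‖ ≤ 1) : specNorm (MatEval ω M) ≤ C * ‖ω‖ ^ matVal M := by
  have hcircle : ∀ z ∈ frontier (Metric.ball (0 : ℂ) 1), ‖shiftedEvalCLM M z‖ ≤ C := by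
    intro z hz
    rw [frontier_ball 0 one_ne_zero, mem_sphere_zero_iff_norm] at hz
    simpa [specNorm_MatEval M (norm_ne_zero_iff.mp (hz ▸ one_ne_zero)), hz] using hC z hz
  have hdisc : ‖shiftedEvalCLM M ω‖ ≤ C :=
    Complex.norm_le_of_forall_mem_frontier_norm_le Metric.isBounded_ball
      (differentiable_shiftedEvalCLM M).diffContOnCl hcircle
      (by rwa [closure_ball 0 one_ne_zero, mem_closedBall_zero_iff])
  rw [specNorm_MatEval M hω0, mul_comm C]
  exact mul_le_mul_of_nonneg_left hdisc (zpow_nonneg (norm_nonneg ω) _)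

end MaximumModulus

theorem IsParaunitary.specNorm_MatEval_le {n : ℕ}
    {U : Matrix (Fin n) (Fin n) (LaurentPolynomial ℂ)} (hU : IsParaunitary U) {ω : ℂ}
    (hω0 : ω ≠ 0) (hω1 : ‖ω‖ ≤ 1) : specNorm (MatEval ω U) ≤ ‖ω‖ ^ matVal U := by
  simpa using specNorm_MatEval_le_of_forall_norm_eq_one U
    (fun _ hz => hU.specNorm_MatEval_le_one hz) hω0 hω1

end

theorem paraunitary_eval_norm_bound_general {n : ℕ}
    (U : Matrix (Fin n) (Fin n) (LaurentPolynomial ℂ)) (hU : IsParaunitary U)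
    (Δ : ℝ) (h0 : 0 < Δ) (h1 : Δ < 1) :
    specNorm (MatEval (Δ : ℂ) U) ≤ Δ ^ matVal U := by
  have hnorm : ‖(Δ : ℂ)‖ = Δ := by rw [Complex.norm_real, Real.norm_of_nonneg h0.le]
  have h := hU.specNorm_MatEval_le (Complex.ofReal_ne_zero.mpr h0.ne') (hnorm.le.trans h1.le)
  rwa [hnorm] at h

/-- norm bound for an evaluated paraunitary matrix. -/
theorem paraunitary_eval_norm_bound {n : ℕ}
    (U : Matrix (Fin n) (Fin n) (LaurentPolynomial ℂ)) (hU : IsParaunitary U) (hU0 : U ≠ 0)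
    (Δ : ℝ) (h0 : 0 < Δ) (h1 : Δ < 1) :
    specNorm (MatEval (Δ : ℂ) U) ≤ Δ ^ matVal U :=
  paraunitary_eval_norm_bound_general U hU Δ h0 h1
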